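/- arXiv:quant-ph/0311136 — 2 statements merged into one kernel-verified Lean document; each statement's English description precedes it below -/
import Mathlib

section
/- For density matrices on finite-dimensional Hilbert spaces, the quantum mutual information I(X:Y) = S(X) + S(Y) - S(XY) is nonnegative, where S denotes the von Neumann entropy and the marginal states are obtained by partial trace. -/
open scoped Classical
open Matrix Kronecker ComplexOrder

/-- Von Neumann entropy `S(ρ) = -Tr(ρ log ρ)`, computed via the eigenvalues of a
Hermitian matrix: `S(ρ) = ∑ᵢ -λᵢ log λᵢ`. -/
noncomputable def vnEntropy {n : Type*} [Fintype n] [DecidableEq n] (ρ : Matrix n n ℂ) : ℝ :=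
  if h : ρ.IsHermitian then ∑ i, Real.negMulLog (h.eigenvalues i) else 0

/-- A density matrix: positive semidefinite with trace one. -/
def IsDensityMatrix {n : Type*} [Fintype n] [DecidableEq n] (ρ : Matrix n n ℂ) : Prop :=
  ρ.PosSemidef ∧ ρ.trace = 1

/-- Partial trace over the second (right) tensor factor. -/
noncomputable def ptraceRight {m n : Type*} [Fintype m] [Fintype n]
    (ρ : Matrix (m × n) (m × n) ℂ) : Matrix m m ℂ :=
  Matrix.of fun i j => ∑ k, ρ (i, k) (j, k)

/-- Partial trace over the first (left) tensor factor. -/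
noncomputable def ptraceLeft {m n : Type*} [Fintype m] [Fintype n]
    (ρ : Matrix (m × n) (m × n) ℂ) : Matrix n n ℂ :=
  Matrix.of fun i j => ∑ k, ρ (k, i) (k, j)

/-- A unit vector (pure state amplitude vector). -/
def IsUnitVec {n : Type*} [Fintype n] (ψ : n → ℂ) : Prop := ∑ i, ‖ψ i‖ ^ 2 = 1

/-!
Diagonalise the marginals, `ρ_X = V diag(a) V*` and `ρ_Y = W diag(b) W*`, and let `c` be the
diagonal of `ρ` in the product basis `V ⊗ W`. For a unitary `G`, the diagonal of `G diag(p) G*` is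
the image of `p` under the doubly stochastic matrix `(|G_ij|²)`, so by concavity of `x ↦ -x log x`
the Shannon entropy of `c` dominates `S(ρ)`. The marginals of `c` are `a` and `b`, whose Shannon
entropies are `S(ρ_X)` and `S(ρ_Y)`, and classical subadditivity `H(c) ≤ H(a) + H(b)` (Gibbs'
inequality against the product distribution `a ⊗ b`) finishes the chain
`S(ρ) ≤ H(c) ≤ S(ρ_X) + S(ρ_Y)`.
-/

section ShannonEntropy

open Real

theorem sum_negMulLog_le_sum_negMulLog_mulVec {n : Type*} [Fintype n] [DecidableEq n]
    {P : Matrix n n ℝ} (hP : P ∈ doublyStochastic ℝ n) {p : n → ℝ} (hp : 0 ≤ p) :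
    ∑ k, negMulLog (p k) ≤ ∑ m, negMulLog ((P *ᵥ p) m) := by
  have jensen : ∀ m, ∑ k, P m k * negMulLog (p k) ≤ negMulLog ((P *ᵥ p) m) := fun m =>
    concaveOn_negMulLog.le_map_sum (fun k _ => nonneg_of_mem_doublyStochastic hP)
      (sum_row_of_mem_doublyStochastic hP m) (fun k _ => hp k)
  calc ∑ k, negMulLog (p k) = ∑ m, ∑ k, P m k * negMulLog (p k) := by
        rw [Finset.sum_comm]
        simp only [← Finset.sum_mul, sum_col_of_mem_doublyStochastic hP, one_mul]
    _ ≤ _ := Finset.sum_le_sum fun m _ => jensen m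

-- Gibbs' inequality pointwise: `log x ≤ x - 1` at `x = a * b / c`.
theorem negMulLog_le_of_le_of_le {a b c : ℝ} (hc : 0 ≤ c) (hca : c ≤ a) (hcb : c ≤ b) :
    negMulLog c ≤ a * b - c - c * log a - c * log b := by
  rcases hc.eq_or_lt with rfl | hc
  · simpa using mul_nonneg hca hcb
  have hab : 0 < a * b := mul_pos (hc.trans_le hca) (hc.trans_le hcb)
  have gibbs : c * log (a * b / c) ≤ c * (a * b / c - 1) :=
    mul_le_mul_of_nonneg_left (log_le_sub_one_of_pos (div_pos hab hc)) hc.le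
  rw [log_div hab.ne' hc.ne', log_mul (hc.trans_le hca).ne' (hc.trans_le hcb).ne'] at gibbs
  rw [negMulLog]
  field_simp at gibbs
  linarith

theorem sum_negMulLog_le_sum_negMulLog_marginals {X Y : Type*} [Fintype X] [Fintype Y]
    {c : X × Y → ℝ} (hc : 0 ≤ c) (hc1 : ∑ m, c m = 1) :
    ∑ m, negMulLog (c m) ≤ ∑ i, negMulLog (∑ j, c (i, j)) + ∑ j, negMulLog (∑ i, c (i, j)) := by
  set a := fun i => ∑ j, c (i, j)
  set b := fun j => ∑ i, c (i, j)
  have hca : ∀ i j, c (i, j) ≤ a i := fun i j =>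
    Finset.single_le_sum (fun j _ => hc (i, j)) (Finset.mem_univ j)
  have hcb : ∀ i j, c (i, j) ≤ b j := fun i j =>
    Finset.single_le_sum (fun i _ => hc (i, j)) (Finset.mem_univ i)
  have hX : ∑ m : X × Y, c m * log (a m.1) = -∑ i, negMulLog (a i) := by
    simp only [Fintype.sum_prod_type, ← Finset.sum_mul, negMulLog, neg_mul,
      Finset.sum_neg_distrib, neg_neg, a]
  have hY : ∑ m : X × Y, c m * log (b m.2) = -∑ j, negMulLog (b j) := by
    simp only [Fintype.sum_prod_type_right, ← Finset.sum_mul, negMulLog, neg_mul,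
      Finset.sum_neg_distrib, neg_neg, b]
  have hab : ∑ m : X × Y, a m.1 * b m.2 = 1 := by
    have ha : ∑ i, a i = 1 := by rw [← hc1, Fintype.sum_prod_type]
    have hb : ∑ j, b j = 1 := by rw [← hc1, Fintype.sum_prod_type_right]
    rw [Fintype.sum_prod_type, ← Finset.sum_mul_sum, ha, hb, one_mul]
  calc ∑ m, negMulLog (c m)
      ≤ ∑ m : X × Y, (a m.1 * b m.2 - c m - c m * log (a m.1) - c m * log (b m.2)) :=
        Finset.sum_le_sum fun ⟨i, j⟩ _ => negMulLog_le_of_le_of_le (hc _) (hca i j) (hcb i j)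
    _ = ∑ i, negMulLog (a i) + ∑ j, negMulLog (b j) := by
        simp only [Finset.sum_sub_distrib, hab, hc1, hX, hY]; ring

end ShannonEntropy

section Spectrum

open Real

theorem mul_diagonal_mul_star_apply_self {n : Type*} [Fintype n] [DecidableEq n]
    (G : Matrix n n ℂ) (p : n → ℝ) (m : n) :
    (G * diagonal (RCLike.ofReal ∘ p : n → ℂ) * star G) m m =
      ((G.map Complex.normSq *ᵥ p) m : ℂ) := by
  rw [mul_apply]
  simp only [mul_diagonal, star_apply, mulVec, dotProduct, map_apply, Complex.ofReal_sum,
    Complex.ofReal_mul, ← Complex.mul_conj, Function.comp_apply, Complex.star_def]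
  exact Finset.sum_congr rfl fun k _ => mul_right_comm _ _ _

theorem map_normSq_mem_doublyStochastic {n : Type*} [Fintype n] [DecidableEq n]
    {G : Matrix n n ℂ} (hG : G ∈ unitaryGroup n ℂ) :
    G.map Complex.normSq ∈ doublyStochastic ℝ n := by
  refine mem_doublyStochastic_iff_sum.2
    ⟨fun i j => Complex.normSq_nonneg _, fun i => ?_, fun j => ?_⟩
  · have h := congr_fun₂ (mem_unitaryGroup_iff.1 hG) i i
    simp only [mul_apply, star_apply, one_apply_eq, Complex.star_def, Complex.mul_conj] at h
    exact_mod_cast h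
  · have h := congr_fun₂ (mem_unitaryGroup_iff'.1 hG) j j
    simp only [mul_apply, star_apply, one_apply_eq, Complex.star_def,
      ← Complex.normSq_eq_conj_mul_self] at h
    exact_mod_cast h

theorem sum_negMulLog_le_sum_negMulLog_diag {n : Type*} [Fintype n] [DecidableEq n]
    {G : Matrix n n ℂ} (hG : G ∈ unitaryGroup n ℂ) {p : n → ℝ} (hp : 0 ≤ p) :
    ∑ k, negMulLog (p k) ≤
      ∑ m, negMulLog ((G * diagonal (RCLike.ofReal ∘ p : n → ℂ) * star G) m m).re := by
  simp only [mul_diagonal_mul_star_apply_self, Complex.ofReal_re]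
  exact sum_negMulLog_le_sum_negMulLog_mulVec (map_normSq_mem_doublyStochastic hG) hp

theorem vnEntropy_le_sum_negMulLog_diag {n : Type*} [Fintype n] [DecidableEq n]
    {A : Matrix n n ℂ} (hA : A.PosSemidef) {U : Matrix n n ℂ} (hU : U ∈ unitaryGroup n ℂ) :
    vnEntropy A ≤ ∑ i, negMulLog ((star U * A * U) i i).re := by
  have hconj : star U * A * U = (star U * hA.1.eigenvectorUnitary) *
      diagonal (RCLike.ofReal ∘ hA.1.eigenvalues : n → ℂ) *
      star (star U * hA.1.eigenvectorUnitary) := by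
    conv_lhs => rw [hA.1.spectral_theorem]
    simp only [Unitary.conjStarAlgAut_apply, star_mul, star_star, Matrix.mul_assoc]
  rw [vnEntropy, dif_pos hA.1, hconj]
  exact sum_negMulLog_le_sum_negMulLog_diag
    (mul_mem (Unitary.star_mem hU) hA.1.eigenvectorUnitary.2) hA.eigenvalues_nonneg

theorem vnEntropy_eq_sum_negMulLog_diag_eigenvectorUnitary {n : Type*} [Fintype n]
    [DecidableEq n] {A : Matrix n n ℂ} (hA : A.IsHermitian) :
    vnEntropy A = ∑ i, negMulLog ((star (hA.eigenvectorUnitary : Matrix n n ℂ) * A *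
      (hA.eigenvectorUnitary : Matrix n n ℂ)) i i).re := by
  rw [vnEntropy, dif_pos hA, ← Unitary.conjStarAlgAut_star_apply (S := ℂ),
    hA.conjStarAlgAut_star_eigenvectorUnitary]
  simp

end Spectrum

section PartialTrace

variable {X Y : Type*} [Fintype X] [Fintype Y]

variable (X) in
def tensorRight [DecidableEq X] [DecidableEq Y] (k : Y) : Matrix (X × Y) X ℂ :=
  of fun m x => if m = (x, k) then 1 else 0

theorem ptraceRight_eq_sum_conjTranspose_mul_mul [DecidableEq X] [DecidableEq Y]
    (ρ : Matrix (X × Y) (X × Y) ℂ) :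
    ptraceRight ρ = ∑ k : Y, (tensorRight X k)ᴴ * ρ * tensorRight X k := by
  ext i j
  simp [ptraceRight, tensorRight, mul_apply, Matrix.sum_apply]

theorem ptraceRight_posSemidef {ρ : Matrix (X × Y) (X × Y) ℂ} (hρ : ρ.PosSemidef) :
    (ptraceRight ρ).PosSemidef := by
  rw [ptraceRight_eq_sum_conjTranspose_mul_mul]
  exact posSemidef_sum _ fun k _ => hρ.conjTranspose_mul_mul_same _

theorem ptraceLeft_eq_ptraceRight_submatrix_swap (ρ : Matrix (X × Y) (X × Y) ℂ) :
    ptraceLeft ρ = ptraceRight (ρ.submatrix Prod.swap Prod.swap) :=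
  rfl

theorem ptraceLeft_posSemidef {ρ : Matrix (X × Y) (X × Y) ℂ} (hρ : ρ.PosSemidef) :
    (ptraceLeft ρ).PosSemidef := by
  rw [ptraceLeft_eq_ptraceRight_submatrix_swap]
  exact ptraceRight_posSemidef (hρ.submatrix _)

theorem ptraceRight_kronecker_mul_mul_kronecker [DecidableEq Y] (M : Matrix (X × Y) (X × Y) ℂ)
    (P R : Matrix X X ℂ) {Q S : Matrix Y Y ℂ} (hSQ : S * Q = 1) :
    ptraceRight ((P ⊗ₖ Q) * M * (R ⊗ₖ S)) = P * ptraceRight M * R := by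
  ext i i'
  have hδ : ∀ y' y, ∑ k, S y' k * Q k y = (1 : Matrix Y Y ℂ) y' y := by
    simp [← hSQ, mul_apply]
  simp only [ptraceRight, of_apply, mul_apply, kroneckerMap_apply, Fintype.sum_prod_type,
    Finset.sum_mul, Finset.mul_sum]
  calc _ = ∑ x', ∑ y', ∑ x, ∑ y, P i x * M (x, y) (x', y') * R x' i' * ∑ k, S y' k * Q k y := by
        simp only [Finset.mul_sum]
        rw [Finset.sum_comm]; refine Finset.sum_congr rfl fun x' _ => ?_
        rw [Finset.sum_comm]; refine Finset.sum_congr rfl fun y' _ => ?_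
        rw [Finset.sum_comm]; refine Finset.sum_congr rfl fun x _ => ?_
        rw [Finset.sum_comm]
        exact Finset.sum_congr rfl fun y _ => Finset.sum_congr rfl fun k _ => by ring
    _ = _ := by
        simp only [hδ, one_apply, mul_ite, mul_one, mul_zero, Finset.sum_ite_eq, Finset.mem_univ,
          if_true]
        exact Finset.sum_congr rfl fun x' _ => Finset.sum_comm

theorem ptraceLeft_kronecker_mul_mul_kronecker [DecidableEq X] (M : Matrix (X × Y) (X × Y) ℂ)
    {P R : Matrix X X ℂ} (Q S : Matrix Y Y ℂ) (hRP : R * P = 1) :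
    ptraceLeft ((P ⊗ₖ Q) * M * (R ⊗ₖ S)) = Q * ptraceLeft M * S := by
  have hswap : ∀ (A : Matrix X X ℂ) (B : Matrix Y Y ℂ),
      (A ⊗ₖ B).submatrix Prod.swap Prod.swap = B ⊗ₖ A := fun A B => by
    ext ⟨⟩ ⟨⟩; simp [mul_comm]
  have hmul : ∀ A B : Matrix (X × Y) (X × Y) ℂ,
      (A * B).submatrix Prod.swap Prod.swap =
        A.submatrix Prod.swap Prod.swap * B.submatrix Prod.swap Prod.swap := fun A B =>
    (submatrix_mul_equiv A B _ (Equiv.prodComm Y X) _).symm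
  rw [ptraceLeft_eq_ptraceRight_submatrix_swap, ptraceLeft_eq_ptraceRight_submatrix_swap,
    hmul, hmul, hswap, hswap]
  exact ptraceRight_kronecker_mul_mul_kronecker _ _ _ hRP

end PartialTrace

/-- nonnegativity of quantum mutual information
`I(X:Y) = S(X) + S(Y) - S(XY) ≥ 0` (subadditivity of von Neumann entropy). -/
theorem mutual_information_nonneg {X Y : Type*} [Fintype X] [Fintype Y]
    [DecidableEq X] [DecidableEq Y]
    (ρ : Matrix (X × Y) (X × Y) ℂ) (hρ : IsDensityMatrix ρ) :
    0 ≤ vnEntropy (ptraceRight ρ) + vnEntropy (ptraceLeft ρ) - vnEntropy ρ := by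
  obtain ⟨hρ, htr⟩ := hρ
  have hX := (ptraceRight_posSemidef hρ).1
  have hY := (ptraceLeft_posSemidef hρ).1
  set V := hX.eigenvectorUnitary
  set W := hY.eigenvectorUnitary
  set F : Matrix (X × Y) (X × Y) ℂ := (V : Matrix X X ℂ) ⊗ₖ (W : Matrix Y Y ℂ)
  have hF : star F = star (V : Matrix X X ℂ) ⊗ₖ star (W : Matrix Y Y ℂ) :=
    conjTranspose_kronecker _ _
  have hF_unitary : F ∈ unitaryGroup (X × Y) ℂ := kronecker_mem_unitary V.2 W.2
  set σ := star F * ρ * F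
  have hσX : ptraceRight σ = star (V : Matrix X X ℂ) * ptraceRight ρ * V := by
    simp only [σ, hF]
    exact ptraceRight_kronecker_mul_mul_kronecker _ _ _ (Unitary.mul_star_self_of_mem W.2)
  have hσY : ptraceLeft σ = star (W : Matrix Y Y ℂ) * ptraceLeft ρ * W := by
    simp only [σ, hF]
    exact ptraceLeft_kronecker_mul_mul_kronecker _ _ _ (Unitary.mul_star_self_of_mem V.2)
  have hσ_nonneg : 0 ≤ fun m => (σ m m).re := fun m =>
    (Complex.nonneg_iff.1 (hρ.conjTranspose_mul_mul_same F).diag_nonneg).1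
  have hσ_trace : ∑ m, (σ m m).re = 1 := by
    rw [← Complex.re_sum, show ∑ m, σ m m = σ.trace from rfl, trace_mul_cycle,
      Unitary.mul_star_self_of_mem hF_unitary, one_mul, htr, Complex.one_re]
  have hschur := vnEntropy_le_sum_negMulLog_diag hρ hF_unitary
  have hsub := sum_negMulLog_le_sum_negMulLog_marginals hσ_nonneg hσ_trace
  rw [vnEntropy_eq_sum_negMulLog_diag_eigenvectorUnitary hX,
    vnEntropy_eq_sum_negMulLog_diag_eigenvectorUnitary hY, ← hσX, ← hσY]
  simp only [ptraceRight, ptraceLeft, of_apply, Complex.re_sum]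
  linarith
end

section
/- In any quantum secret sharing scheme realizing an access structure in which the complement of every authorized set is unauthorized and the full player set is authorized, the secrecy requirement I(R:A)=0 for all unauthorized A that are complements of authorized sets follows from the recoverability requirement, given that the global state on R together with all shares is pure. -/
/-!
Dilate the recovery channel to the isometry `∑ₖ |k⟩ ⊗ Kₖ` on `B`. Applied to the pure global
state it gives a pure state on `R A ι S` whose `RS`-marginal is the pure state `φ`; a pure state
with a pure marginal is a product `φ ⊗ c`, so its `RA`-marginal is a product state. The isometry
acts on `B` only, so this `RA`-marginal is `ρ_RA`. Finally, von Neumann entropy is additive on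
tensor products.
-/

open scoped Classical
open Matrix Kronecker ComplexOrder

/-- Marginal on `R` of a state on `R ⊗ A ⊗ B`. -/
noncomputable def margR {R A B : Type*} [Fintype R] [Fintype A] [Fintype B]
    (ρ : Matrix (R × A × B) (R × A × B) ℂ) : Matrix R R ℂ :=
  Matrix.of fun i j => ∑ p : A × B, ρ (i, p) (j, p)

/-- Marginal on `A` of a state on `R ⊗ A ⊗ B`. -/
noncomputable def margA {R A B : Type*} [Fintype R] [Fintype A] [Fintype B]
    (ρ : Matrix (R × A × B) (R × A × B) ℂ) : Matrix A A ℂ :=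
  Matrix.of fun i j => ∑ r, ∑ b, ρ (r, i, b) (r, j, b)

/-- Marginal on `RA` of a state on `R ⊗ A ⊗ B`. -/
noncomputable def margRA {R A B : Type*} [Fintype R] [Fintype A] [Fintype B]
    (ρ : Matrix (R × A × B) (R × A × B) ℂ) : Matrix (R × A) (R × A) ℂ :=
  Matrix.of fun i j => ∑ b, ρ (i.1, i.2, b) (j.1, j.2, b)

/-- Marginal on `RB` of a state on `R ⊗ A ⊗ B`. -/
noncomputable def margRB {R A B : Type*} [Fintype R] [Fintype A] [Fintype B]
    (ρ : Matrix (R × A × B) (R × A × B) ℂ) : Matrix (R × B) (R × B) ℂ :=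
  Matrix.of fun i j => ∑ a, ρ (i.1, a, i.2) (j.1, a, j.2)

theorem IsUnitVec.star_dotProduct_self {n : Type*} [Fintype n] {ψ : n → ℂ} (hψ : IsUnitVec ψ) :
    star ψ ⬝ᵥ ψ = 1 := by
  simp only [dotProduct, Pi.star_apply, Complex.star_def, Complex.conj_mul']
  exact_mod_cast hψ

theorem IsUnitVec.trace_vecMulVec {n : Type*} [Fintype n] {ψ : n → ℂ} (hψ : IsUnitVec ψ) :
    (vecMulVec ψ (star ψ)).trace = 1 := by
  rw [Matrix.trace_vecMulVec, dotProduct_comm, hψ.star_dotProduct_self]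

namespace Matrix

open Polynomial

theorem eq_vecMulVec_of_mul_conjTranspose_self_eq {m n : Type*} [Fintype m] [Fintype n]
    {W : Matrix m n ℂ} {φ : m → ℂ} (hφ : star φ ⬝ᵥ φ = 1)
    (h : W * Wᴴ = vecMulVec φ (star φ)) : W = vecMulVec φ (star φ ᵥ* W) := by
  set P := vecMulVec φ (star φ)
  have hPP : P * P = P := by rw [vecMulVec_mul_vecMulVec, hφ, one_smul]
  have hPh : Pᴴ = P := by rw [conjTranspose_vecMulVec, star_star]
  have hQ : (1 - P) * P = 0 := by rw [sub_mul, one_mul, hPP, sub_self]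
  -- `(1 - P) W` has Gram matrix `(1 - P) P (1 - P) = 0`.
  have hN : (1 - P) * W = 0 := by
    rw [← self_mul_conjTranspose_eq_zero, conjTranspose_mul, Matrix.mul_assoc,
      ← Matrix.mul_assoc W, h, conjTranspose_sub, conjTranspose_one, hPh, ← Matrix.mul_assoc, hQ,
      zero_mul]
  rw [Matrix.sub_mul, Matrix.one_mul, sub_eq_zero] at hN
  rw [← vecMulVec_mul]
  exact hN

theorem mul_vecMulVec_star_mul_conjTranspose {m n : Type*} [Fintype n] (M : Matrix m n ℂ)
    (v : n → ℂ) : M * vecMulVec v (star v) * Mᴴ = vecMulVec (M *ᵥ v) (star (M *ᵥ v)) := by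
  rw [mul_vecMulVec, vecMulVec_mul, star_mulVec]

theorem one_kronecker_mulVec {l m n : Type*} [Fintype l] [DecidableEq l] [Fintype n]
    (T : Matrix m n ℂ) (v : l × n → ℂ) :
    ((1 : Matrix l l ℂ) ⊗ₖ T) *ᵥ v = fun p => ∑ b, v (p.1, b) * T p.2 b := by
  ext ⟨r, s⟩
  simp [mulVec, dotProduct, one_apply, Fintype.sum_prod_type, mul_comm]

theorem IsHermitian.kronecker {m n : Type*} {P : Matrix m m ℂ} {Q : Matrix n n ℂ}
    (hP : P.IsHermitian) (hQ : Q.IsHermitian) : (P ⊗ₖ Q).IsHermitian := by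
  rw [IsHermitian, conjTranspose_kronecker, hP.eq, hQ.eq]

variable {m n : Type*} [Fintype m] [Fintype n] [DecidableEq m] [DecidableEq n]

theorem IsHermitian.charpoly_kronecker {P : Matrix m m ℂ} {Q : Matrix n n ℂ}
    (hP : P.IsHermitian) (hQ : Q.IsHermitian) :
    (P ⊗ₖ Q).charpoly =
      ∏ p : m × n, (X - C ((hP.eigenvalues p.1 * hQ.eigenvalues p.2 : ℝ) : ℂ)) := by
  have hU := (mem_unitaryGroup_iff').mp hP.eigenvectorUnitary.2
  have hV := (mem_unitaryGroup_iff').mp hQ.eigenvectorUnitary.2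
  conv_lhs => rw [hP.spectral_theorem, hQ.spectral_theorem]
  rw [Unitary.conjStarAlgAut_apply, Unitary.conjStarAlgAut_apply, mul_kronecker_mul,
    mul_kronecker_mul, charpoly_mul_comm, ← mul_assoc, ← mul_kronecker_mul, hU, hV,
    one_kronecker_one, one_mul, diagonal_kronecker_diagonal, charpoly_diagonal]
  simp

theorem IsHermitian.vnEntropy_eq_of_charpoly_eq {ι : Type*} [Fintype ι] {M : Matrix m m ℂ}
    (hM : M.IsHermitian) (d : ι → ℝ) (h : M.charpoly = ∏ i, (X - C (d i : ℂ))) :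
    vnEntropy M = ∑ i, Real.negMulLog (d i) := by
  have hroots : Finset.univ.val.map hM.eigenvalues = Finset.univ.val.map d := by
    apply Multiset.map_injective Complex.ofReal_injective
    have := hM.roots_charpoly_eq_eigenvalues
    rw [h, roots_prod _ _ (by simp [Finset.prod_ne_zero_iff, X_sub_C_ne_zero])] at this
    simpa [Multiset.map_map] using this.symm
  rw [vnEntropy, dif_pos hM]
  simpa [Multiset.map_map] using congrArg (fun s => (s.map Real.negMulLog).sum) hroots

theorem IsHermitian.sum_eigenvalues_eq_one {M : Matrix m m ℂ} (hM : M.IsHermitian)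
    (htr : M.trace = 1) : ∑ i, hM.eigenvalues i = 1 := by
  apply Complex.ofReal_injective
  simpa [htr] using hM.trace_eq_sum_eigenvalues.symm

theorem vnEntropy_kronecker {P : Matrix m m ℂ} {Q : Matrix n n ℂ} (hP : P.IsHermitian)
    (hQ : Q.IsHermitian) (htP : P.trace = 1) (htQ : Q.trace = 1) :
    vnEntropy (P ⊗ₖ Q) = vnEntropy P + vnEntropy Q := by
  rw [(hP.kronecker hQ).vnEntropy_eq_of_charpoly_eq _ (hP.charpoly_kronecker hQ), vnEntropy,
    vnEntropy, dif_pos hP, dif_pos hQ, Fintype.sum_prod_type]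
  simp only [Real.negMulLog_mul, Finset.sum_add_distrib, ← Finset.sum_mul, ← Finset.mul_sum,
    hP.sum_eigenvalues_eq_one htP, hQ.sum_eigenvalues_eq_one htQ, one_mul]

end Matrix

section PartialTrace

variable {m n : Type*} [Fintype m] [Fintype n]

theorem ptraceRight_kronecker (P : Matrix m m ℂ) (Q : Matrix n n ℂ) :
    ptraceRight (P ⊗ₖ Q) = Q.trace • P := by
  ext
  simp [ptraceRight, trace, Finset.mul_sum, mul_comm]

theorem ptraceLeft_kronecker (P : Matrix m m ℂ) (Q : Matrix n n ℂ) :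
    ptraceLeft (P ⊗ₖ Q) = P.trace • Q := by
  ext
  simp [ptraceLeft, trace, Finset.sum_mul]

theorem kronecker_eq_ptraceRight_kronecker_ptraceLeft {P : Matrix m m ℂ} {Q : Matrix n n ℂ}
    (h : (P ⊗ₖ Q).trace = 1) : P ⊗ₖ Q = ptraceRight (P ⊗ₖ Q) ⊗ₖ ptraceLeft (P ⊗ₖ Q) := by
  rw [trace_kronecker] at h
  rw [ptraceRight_kronecker, ptraceLeft_kronecker, smul_kronecker, kronecker_smul, smul_smul,
    mul_comm, h, one_smul]

theorem trace_ptraceRight (ρ : Matrix (m × n) (m × n) ℂ) : (ptraceRight ρ).trace = ρ.trace := by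
  simp [trace, ptraceRight, Fintype.sum_prod_type]

theorem trace_ptraceLeft (ρ : Matrix (m × n) (m × n) ℂ) : (ptraceLeft ρ).trace = ρ.trace := by
  simp only [trace, ptraceLeft, diag_apply, of_apply, Fintype.sum_prod_type]
  exact Finset.sum_comm

theorem Matrix.IsHermitian.ptraceRight {ρ : Matrix (m × n) (m × n) ℂ} (hρ : ρ.IsHermitian) :
    (ptraceRight ρ).IsHermitian := by
  ext i j
  simp only [_root_.ptraceRight, conjTranspose_apply, of_apply, star_sum, hρ.apply]

theorem Matrix.IsHermitian.ptraceLeft {ρ : Matrix (m × n) (m × n) ℂ} (hρ : ρ.IsHermitian) :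
    (ptraceLeft ρ).IsHermitian := by
  ext i j
  simp only [_root_.ptraceLeft, conjTranspose_apply, of_apply, star_sum, hρ.apply]

end PartialTrace

section Tripartite

variable {R A B S : Type*} [Fintype R] [Fintype A] [Fintype B] [Fintype S]

theorem margR_eq_ptraceRight_margRA (ρ : Matrix (R × A × B) (R × A × B) ℂ) :
    margR ρ = ptraceRight (margRA ρ) := by
  ext r r'
  exact Fintype.sum_prod_type _

theorem margA_eq_ptraceLeft_margRA (ρ : Matrix (R × A × B) (R × A × B) ℂ) :
    margA ρ = ptraceLeft (margRA ρ) :=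
  rfl

theorem trace_margRA (ρ : Matrix (R × A × B) (R × A × B) ℂ) : (margRA ρ).trace = ρ.trace := by
  simp [trace, margRA, Fintype.sum_prod_type]

theorem margRA_vecMulVec_star (Ψ : R × A × B → ℂ) :
    margRA (vecMulVec Ψ (star Ψ)) =
      (of fun p b => Ψ (p.1, p.2, b)) * (of fun p b => Ψ (p.1, p.2, b) : Matrix (R × A) B ℂ)ᴴ :=
  rfl

theorem margRB_vecMulVec_star (Ψ : R × A × B → ℂ) :
    margRB (vecMulVec Ψ (star Ψ)) =
      ∑ a, vecMulVec (fun p => Ψ (p.1, a, p.2)) (star fun p => Ψ (p.1, a, p.2)) := by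
  ext
  simp [margRB, Matrix.sum_apply, vecMulVec_apply]

/-- `(1_R ⊗ 1_A ⊗ T) Ψ`. -/
def mulVecLast {E : Type*} (T : Matrix E B ℂ) (Ψ : R × A × B → ℂ) : R × A × E → ℂ :=
  fun x => ∑ b, Ψ (x.1, x.2.1, b) * T x.2.2 b

theorem margRB_vecMulVec_mulVecLast [DecidableEq R] (T : Matrix S B ℂ) (Ψ : R × A × B → ℂ) :
    margRB (vecMulVec (mulVecLast T Ψ) (star (mulVecLast T Ψ))) =
      ((1 : Matrix R R ℂ) ⊗ₖ T) * margRB (vecMulVec Ψ (star Ψ)) *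
        ((1 : Matrix R R ℂ) ⊗ₖ T)ᴴ := by
  simp only [margRB_vecMulVec_star, Matrix.mul_sum, Matrix.sum_mul,
    mul_vecMulVec_star_mul_conjTranspose, one_kronecker_mulVec]
  rfl

theorem sum_margRA_vecMulVec_mulVecLast {ι : Type*} [Fintype ι] [DecidableEq B]
    {K : ι → Matrix S B ℂ} (hK : ∑ k, (K k)ᴴ * K k = 1) (Ψ : R × A × B → ℂ) :
    ∑ k, margRA (vecMulVec (mulVecLast (K k) Ψ) (star (mulVecLast (K k) Ψ))) =
      margRA (vecMulVec Ψ (star Ψ)) := by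
  set W : Matrix (R × A) B ℂ := of fun p b => Ψ (p.1, p.2, b)
  have hKt : ∑ k, ((K k)ᴴ * K k)ᵀ = 1 := by
    have := congrArg transpose hK
    rwa [transpose_sum, transpose_one] at this
  calc ∑ k, margRA (vecMulVec (mulVecLast (K k) Ψ) (star (mulVecLast (K k) Ψ)))
      = ∑ k, (W * (K k)ᵀ) * (W * (K k)ᵀ)ᴴ := rfl
    _ = ∑ k, W * ((K k)ᴴ * K k)ᵀ * Wᴴ := by
        simp only [conjTranspose_mul, transpose_mul, Matrix.mul_assoc]
        rfl
    _ = margRA (vecMulVec Ψ (star Ψ)) := by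
        rw [← Matrix.sum_mul, ← Matrix.mul_sum, hKt, Matrix.mul_one, margRA_vecMulVec_star]

theorem exists_sum_margRA_eq_kronecker_of_sum_margRB_eq {ι : Type*} [Fintype ι]
    {ψ : ι → R × A × S → ℂ} {φ : R × S → ℂ} (hφ : star φ ⬝ᵥ φ = 1)
    (h : ∑ k, margRB (vecMulVec (ψ k) (star (ψ k))) = vecMulVec φ (star φ)) :
    ∃ M : Matrix A A ℂ,
      ∑ k, margRA (vecMulVec (ψ k) (star (ψ k))) = ptraceRight (vecMulVec φ (star φ)) ⊗ₖ M := by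
  set W : Matrix (R × S) (ι × A) ℂ := of fun x t => ψ t.1 (x.1, t.2, x.2)
  have hW : W * Wᴴ = vecMulVec φ (star φ) := by
    rw [← h]
    ext x y
    simp [W, mul_apply, Fintype.sum_prod_type, Matrix.sum_apply, margRB, vecMulVec_apply]
  set c := star φ ᵥ* W
  have hψ : ∀ k r a s, ψ k (r, a, s) = φ (r, s) * c (k, a) := fun k r a s =>
    congrFun (congrFun (eq_vecMulVec_of_mul_conjTranspose_self_eq hφ hW) (r, s)) (k, a)
  refine ⟨ptraceLeft (vecMulVec c (star c)), ?_⟩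
  ext ⟨r, a⟩ ⟨r', a'⟩
  simp only [Matrix.sum_apply, margRA, ptraceRight, ptraceLeft, of_apply, kroneckerMap_apply,
    vecMulVec_apply, Pi.star_apply, hψ, star_mul', Finset.sum_mul_sum]
  rw [Finset.sum_comm]
  exact Finset.sum_congr rfl fun _ _ => Finset.sum_congr rfl fun _ _ => by ring

end Tripartite

theorem recoverability_implies_secrecy_general {R A B S : Type*}
    [Fintype R] [Fintype A] [Fintype B] [Fintype S]
    [DecidableEq R] [DecidableEq A] [DecidableEq B]
    (ρ : Matrix (R × A × B) (R × A × B) ℂ)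
    (hpureGlobal : ∃ Ψ : R × A × B → ℂ, IsUnitVec Ψ ∧ ρ = Matrix.vecMulVec Ψ (star Ψ))
    (ι : Type) [Fintype ι] (K : ι → Matrix S B ℂ)
    (hKraus : ∑ k, (K k)ᴴ * K k = 1)
    (φ : R × S → ℂ) (hφ : IsUnitVec φ)
    (hrec : ∑ k, ((1 : Matrix R R ℂ) ⊗ₖ K k) * margRB ρ * ((1 : Matrix R R ℂ) ⊗ₖ K k)ᴴ
            = Matrix.vecMulVec φ (star φ)) :
    margRA ρ = (margR ρ) ⊗ₖ (margA ρ) ∧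
      vnEntropy (margR ρ) + vnEntropy (margA ρ) - vnEntropy (margRA ρ) = 0 := by
  obtain ⟨Ψ, hΨ, rfl⟩ := hpureGlobal
  set ρ := vecMulVec Ψ (star Ψ)
  have hRS : ∑ k, margRB (vecMulVec (mulVecLast (K k) Ψ) (star (mulVecLast (K k) Ψ))) =
      vecMulVec φ (star φ) := by
    simpa only [margRB_vecMulVec_mulVecLast] using hrec
  obtain ⟨M, hM⟩ :=
    exists_sum_margRA_eq_kronecker_of_sum_margRB_eq hφ.star_dotProduct_self hRS
  rw [sum_margRA_vecMulVec_mulVecLast hKraus] at hM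
  have hRA : (margRA ρ).IsHermitian := by
    rw [margRA_vecMulVec_star]
    exact isHermitian_mul_conjTranspose_self _
  have htr : (margRA ρ).trace = 1 := by rw [trace_margRA, hΨ.trace_vecMulVec]
  have hprod : margRA ρ = margR ρ ⊗ₖ margA ρ := by
    rw [margR_eq_ptraceRight_margRA, margA_eq_ptraceLeft_margRA, hM]
    exact kronecker_eq_ptraceRight_kronecker_ptraceLeft (hM ▸ htr)
  refine ⟨hprod, ?_⟩
  rw [hprod, vnEntropy_kronecker, sub_self]
  · rw [margR_eq_ptraceRight_margRA]; exact hRA.ptraceRight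
  · rw [margA_eq_ptraceLeft_margRA]; exact hRA.ptraceLeft
  · rw [margR_eq_ptraceRight_margRA, trace_ptraceRight, htr]
  · rw [margA_eq_ptraceLeft_margRA, trace_ptraceLeft, htr]

/-- recoverability implies secrecy for access structures in which the
complement of every authorized set is unauthorized. Concretely: the shares split as
`A` (an unauthorized set, the complement of an authorized set) and `B = A'`
(its complement, authorized); the global state `|R P₁ … P_m⟩` is pure, and the
authorized complement `B` can recover the secret via a CPTP map `T_B` (Kraus
operators `K`) with `(id_R ⊗ T_B)(ρ_{RB}) = |RS⟩⟨RS|`. Then secrecy holds: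
`ρ_{RA} = ρ_R ⊗ ρ_A`, i.e. `I(R:A) = 0`. -/
theorem recoverability_implies_secrecy {R A B S : Type*}
    [Fintype R] [Fintype A] [Fintype B] [Fintype S]
    [DecidableEq R] [DecidableEq A] [DecidableEq B] [DecidableEq S]
    (ρ : Matrix (R × A × B) (R × A × B) ℂ)
    (hpureGlobal : ∃ Ψ : R × A × B → ℂ, IsUnitVec Ψ ∧ ρ = Matrix.vecMulVec Ψ (star Ψ))
    (ι : Type) [Fintype ι] (K : ι → Matrix S B ℂ)
    (hKraus : ∑ k, (K k)ᴴ * K k = 1)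
    (φ : R × S → ℂ) (hφ : IsUnitVec φ)
    (hrec : ∑ k, ((1 : Matrix R R ℂ) ⊗ₖ K k) * margRB ρ * ((1 : Matrix R R ℂ) ⊗ₖ K k)ᴴ
            = Matrix.vecMulVec φ (star φ)) :
    margRA ρ = (margR ρ) ⊗ₖ (margA ρ) ∧
      vnEntropy (margR ρ) + vnEntropy (margA ρ) - vnEntropy (margRA ρ) = 0 :=
  recoverability_implies_secrecy_general ρ hpureGlobal ι K hKraus φ hφ hrec
end
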